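/- Let f be C¹ on an open neighborhood of C and strongly competitive, with axial rest points x^(1),…,x^(n), and let I ⊆ {1,…,n} have |I| ≤ n−2. If x : [0,T] → C (T > 0) is differentiable, satisfies x_k'(t) = x_k(t) f_k(x(t)) for all k and t, and x(0) = x^[I], then there exists δ > 0 such that for every t ∈ (0,δ) one has x_i(t) < x^[I]_i for all i ∈ I' (and x_j(t) = 0 for all j ∈ I); that is, the solution through x^[I] immediately enters the region strictly ≪_I-below x^[I]. -/

import Mathlib

/-!
Coordinates in `I` vanish at time `0`, and a solution of `y' = y·g` starting at `0` stays `0`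
(Gronwall). For `i ∉ I`, the point `x^[I]` is obtained from the axial rest point `x^(i)` by raising
the other coordinates, at least one of them strictly (this is where `|I| ≤ n - 2` enters); strong
competition then forces `f_i(x^[I]) < f_i(x^(i)) = 0` by the mean value theorem along the segment.
Hence `x_i' (0) = x^[I]_i f_i(x^[I]) < 0`, so each such coordinate drops below its initial value
immediately.
-/

open Set Filter Topology

theorem ContinuousLinearMap.apply_neg_of_apply_single_neg {ι : Type*} [Fintype ι] [DecidableEq ι]
    (L : (ι → ℝ) →L[ℝ] ℝ) {i : ι} (hL : ∀ k, k ≠ i → L (Pi.single k 1) < 0) {v : ι → ℝ}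
    (hv : 0 < v) (hvi : v i = 0) : L v < 0 := by
  obtain ⟨hv0, k₀, hk₀⟩ := Pi.lt_def.1 hv
  have hk₀i : k₀ ≠ i := by
    rintro rfl
    simp [hvi] at hk₀
  have hterm : ∀ k, v k * L (Pi.single k 1) ≤ 0 := by
    intro k
    rcases eq_or_ne k i with rfl | hki
    · simp [hvi]
    · exact mul_nonpos_of_nonneg_of_nonpos (hv0 k) (hL k hki).le
  calc L v = ∑ k, v k * L (Pi.single k 1) := by
        conv_lhs => rw [← Finset.univ_sum_single v]
        rw [map_sum]
        refine Finset.sum_congr rfl fun k _ => ?_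
        rw [← smul_eq_mul, ← map_smul, ← Pi.single_smul, smul_eq_mul, mul_one]
    _ < 0 := Finset.sum_neg' (fun k _ => hterm k)
        ⟨k₀, Finset.mem_univ _, mul_neg_of_pos_of_neg hk₀ (hL k₀ hk₀i)⟩

theorem apply_lt_apply_of_fderiv_single_neg {ι : Type*} [Fintype ι] [DecidableEq ι]
    {g : (ι → ℝ) → ℝ} {i : ι} (hg : ∀ p, 0 ≤ p → DifferentiableAt ℝ g p)
    (hcomp : ∀ p, 0 ≤ p → ∀ k, k ≠ i → fderiv ℝ g p (Pi.single k 1) < 0)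
    {a b : ι → ℝ} (ha : 0 ≤ a) (hab : a < b) (hi : a i = b i) : g b < g a := by
  obtain ⟨z, hz, hgz⟩ := domain_mvt (f := g) (s := Ici 0) (f' := fderiv ℝ g)
    (fun p hp => (hg p hp).hasFDerivAt.hasFDerivWithinAt) (convex_Ici 0) ha (ha.trans hab.le)
  have hz0 : 0 ≤ z := (convex_Ici (0 : ι → ℝ)).segment_subset ha (ha.trans hab.le) hz
  have hneg := (fderiv ℝ g z).apply_neg_of_apply_single_neg (hcomp z hz0) (sub_pos.2 hab)
    (by simp [hi])
  linarith

theorem eqOn_zero_of_hasDerivWithinAt_mul {y g : ℝ → ℝ} {a b : ℝ} (hg : ContinuousOn g (Icc a b))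
    (hy : ∀ t ∈ Icc a b, HasDerivWithinAt y (y t * g t) (Icc a b) t) (ha : y a = 0) :
    EqOn y 0 (Icc a b) := by
  obtain ⟨K, hK⟩ := isCompact_Icc.exists_bound_of_continuousOn hg
  have hbound := norm_le_gronwallBound_of_norm_deriv_right_le (δ := 0) (K := K) (ε := 0)
    (fun t ht => (hy t ht).continuousWithinAt)
    (fun t ht => (hy t (Ico_subset_Icc_self ht)).mono_of_mem_nhdsWithin (Icc_mem_nhdsGE_of_mem ht))
    (by simp [ha])
    (fun t ht => by
      rw [norm_mul, mul_comm, add_zero]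
      exact mul_le_mul_of_nonneg_right (hK t (Ico_subset_Icc_self ht)) (norm_nonneg _))
  intro t ht
  simpa [gronwallBound_ε0_δ0] using hbound t ht

theorem HasDerivWithinAt.eventually_lt_of_neg {y : ℝ → ℝ} {y' a : ℝ} {s : Set ℝ}
    (hy : HasDerivWithinAt y y' s a) (hs : s ∈ 𝓝[≥] a) (hy' : y' < 0) :
    ∀ᶠ t in 𝓝[>] a, y t < y a := by
  have hslope := (hasDerivWithinAt_iff_tendsto_slope' (lt_irrefl a)).1
    (hy.mono_of_mem_nhdsWithin hs).Ioi_of_Ici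
  filter_upwards [hslope.eventually_lt_const hy', self_mem_nhdsWithin] with t ht hat
  rw [slope_def_field, div_neg_iff] at ht
  rcases ht with ⟨-, h⟩ | ⟨h, -⟩
  · linarith [mem_Ioi.1 hat]
  · linarith

theorem axial_lt_of_card_add_one_lt {ι : Type*} [Fintype ι] [DecidableEq ι] {xa : ι → ι → ℝ}
    (hpos : ∀ j, 0 < xa j j) (hzero : ∀ j k, k ≠ j → xa j k = 0) {I : Finset ι}
    (hI : I.card + 1 < Fintype.card ι) {i : ι} (hi : i ∉ I) :
    xa i < fun j => if j ∈ I then 0 else xa j j := by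
  obtain ⟨k, -, hk⟩ := Finset.exists_mem_notMem_of_card_lt_card (s := insert i I)
    ((Finset.card_insert_le i I).trans_lt (hI.trans_eq Finset.card_univ.symm))
  have hki : k ≠ i := fun h => hk (h ▸ Finset.mem_insert_self i I)
  have hkI : k ∉ I := fun h => hk (Finset.mem_insert_of_mem h)
  refine Pi.lt_def.2 ⟨fun m => ?_, k, by simp [hkI, hzero i k hki, hpos]⟩
  rcases eq_or_ne m i with rfl | hmi
  · simp [hi]
  · by_cases hm : m ∈ I <;> simp [hm, hzero i m hmi, (hpos m).le]

theorem stmt3_general {n : ℕ} (hn : 3 ≤ n) (f : (Fin n → ℝ) → (Fin n → ℝ)) (U : Set (Fin n → ℝ))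
    (hU : IsOpen U) (hCU : {x : Fin n → ℝ | ∀ k, 0 ≤ x k} ⊆ U)
    (hf : ContDiffOn ℝ 1 f U)
    (hcomp : ∀ x : Fin n → ℝ, (∀ k, 0 ≤ x k) → ∀ i j : Fin n, i ≠ j →
      fderiv ℝ (fun y => f y i) x (Pi.single j 1) < 0)
    (xa : Fin n → (Fin n → ℝ))
    (hxapos : ∀ j, 0 < xa j j)
    (hxazero : ∀ j k, k ≠ j → xa j k = 0)
    (hxarest : ∀ j, f (xa j) j = 0)
    (I : Finset (Fin n)) (hI : I.card ≤ n - 2)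
    (xI : Fin n → ℝ) (hxI : xI = fun j => if j ∈ I then 0 else xa j j)
    (T : ℝ) (hT : 0 < T) (x : ℝ → (Fin n → ℝ))
    (hxC : ∀ t ∈ Set.Icc 0 T, ∀ k, 0 ≤ x t k)
    (hode : ∀ k : Fin n, ∀ t ∈ Set.Icc 0 T,
      HasDerivWithinAt (fun s => x s k) (x t k * f (x t) k) (Set.Icc 0 T) t)
    (hx0 : x 0 = xI) :
    ∃ δ : ℝ, 0 < δ ∧ δ ≤ T ∧ ∀ t : ℝ, 0 < t → t < δ →
      (∀ i ∉ I, x t i < xI i) ∧ (∀ j ∈ I, x t j = 0) := by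
  have hfdiff : ∀ p : Fin n → ℝ, 0 ≤ p → DifferentiableAt ℝ f p := fun p hp =>
    (hf.differentiableOn one_ne_zero p (hCU hp)).differentiableAt (hU.mem_nhds (hCU hp))
  have hzero : ∀ j ∈ I, EqOn (fun t => x t j) 0 (Icc 0 T) := fun j hj =>
    eqOn_zero_of_hasDerivWithinAt_mul
      ((continuous_apply j).comp_continuousOn (hf.continuousOn.comp
        (continuousOn_pi.2 fun k t ht => (hode k t ht).continuousWithinAt)
        fun t ht => hCU (hxC t ht)))
      (hode j) (by simp [hx0, hxI, hj])
  have hfneg : ∀ i ∉ I, f xI i < 0 := by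
    intro i hi
    have hxa_lt : xa i < xI := hxI ▸ axial_lt_of_card_add_one_lt hxapos hxazero
      (by rw [Fintype.card_fin]; omega) hi
    simpa [hxarest] using apply_lt_apply_of_fderiv_single_neg (g := fun y => f y i)
      (fun p hp => differentiableAt_pi.1 (hfdiff p hp) i) (fun p hp k hk => hcomp p hp i k hk.symm)
      (fun m => (eq_or_ne m i).elim (fun h => h ▸ (hxapos i).le) fun h => (hxazero i m h).ge)
      hxa_lt (by simp [hxI, hi])
  have hdrop : ∀ i ∉ I, ∀ᶠ t in 𝓝[>] 0, x t i < xI i := fun i hi => by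
    simpa [hx0] using (hode i 0 ⟨le_rfl, hT.le⟩).eventually_lt_of_neg (Icc_mem_nhdsGE hT)
      (by rw [hx0]; exact mul_neg_of_pos_of_neg (by simp [hxI, hi, hxapos]) (hfneg i hi))
  obtain ⟨δ, hδ, hsub⟩ := mem_nhdsGT_iff_exists_Ioo_subset.1
    ((eventually_all_finset Iᶜ).2 fun i hi => hdrop i (Finset.mem_compl.1 hi))
  refine ⟨min δ T, lt_min hδ hT, min_le_right _ _,
    fun t ht0 htδ => ⟨fun i hi => ?_, fun j hj => ?_⟩⟩
  · exact hsub ⟨ht0, htδ.trans_le (min_le_left _ _)⟩ i (Finset.mem_compl.2 hi)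
  · exact hzero j hj ⟨ht0.le, (htδ.trans_le (min_le_right _ _)).le⟩

/-- Let `f` be `C¹` on an open neighborhood of the orthant and strongly competitive, with axial
rest points `x^(1),…,x^(n)`, and let `|I| ≤ n - 2`.  If `x : [0,T] → C` solves
`x_k' = x_k f_k(x)` and `x(0) = x^[I]`, then there is `δ > 0` such that for all `t ∈ (0,δ)`
one has `x_i(t) < x^[I]_i` for all `i ∈ I'` and `x_j(t) = 0` for all `j ∈ I`:
the solution through `x^[I]` immediately enters the region strictly `≪_I`-below `x^[I]`. -/
theorem stmt3 {n : ℕ} (hn : 3 ≤ n) (f : (Fin n → ℝ) → (Fin n → ℝ)) (U : Set (Fin n → ℝ))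
    (hU : IsOpen U) (hCU : {x : Fin n → ℝ | ∀ k, 0 ≤ x k} ⊆ U)
    (hf : ContDiffOn ℝ 1 f U)
    (hcomp : ∀ x : Fin n → ℝ, (∀ k, 0 ≤ x k) → ∀ i j : Fin n, i ≠ j →
      fderiv ℝ (fun y => f y i) x (Pi.single j 1) < 0)
    (xa : Fin n → (Fin n → ℝ))
    (hxaC : ∀ j k, 0 ≤ xa j k)
    (hxapos : ∀ j, 0 < xa j j)
    (hxazero : ∀ j k, k ≠ j → xa j k = 0)
    (hxarest : ∀ j, f (xa j) j = 0)
    (I : Finset (Fin n)) (hI : I.card ≤ n - 2)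
    (xI : Fin n → ℝ) (hxI : xI = fun j => if j ∈ I then 0 else xa j j)
    (T : ℝ) (hT : 0 < T) (x : ℝ → (Fin n → ℝ))
    (hxC : ∀ t ∈ Set.Icc 0 T, ∀ k, 0 ≤ x t k)
    (hode : ∀ k : Fin n, ∀ t ∈ Set.Icc 0 T,
      HasDerivWithinAt (fun s => x s k) (x t k * f (x t) k) (Set.Icc 0 T) t)
    (hx0 : x 0 = xI) :
    ∃ δ : ℝ, 0 < δ ∧ δ ≤ T ∧ ∀ t : ℝ, 0 < t → t < δ →
      (∀ i ∉ I, x t i < xI i) ∧ (∀ j ∈ I, x t j = 0) :=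
  stmt3_general hn f U hU hCU hf hcomp xa hxapos hxazero hxarest I hI xI hxI T hT x hxC hode hx0
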